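/- If a bounded net (x_α) in a CAT(0) space X converges weakly to a point x ∈ X, then (x_α) converges to x with respect to the weak topology T_Δ. -/

import Mathlib

open Filter Topology Metric Set

/-- `m` is a midpoint of `x` and `y`. -/
def IsMidpoint {X : Type*} [MetricSpace X] (x y m : X) : Prop :=
  dist x m = dist x y / 2 ∧ dist y m = dist x y / 2

/-- A CAT(0) space: a complete metric space with midpoints satisfying the
CN-inequality of Bruhat–Tits. -/
def IsCAT0 (X : Type*) [MetricSpace X] : Prop :=
  CompleteSpace X ∧
    (∀ x y : X, ∃ m : X, IsMidpoint x y m) ∧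
    (∀ x y z m : X, IsMidpoint x y m →
      dist z m ^ 2 ≤ dist z x ^ 2 / 2 + dist z y ^ 2 / 2 - dist x y ^ 2 / 4)

/-- `G` is a (compact) geodesic segment starting at `x`: the image of an
isometric embedding of a compact interval `[0, L]` whose left endpoint is
mapped to `x`. -/
def IsGeodesicSegmentFrom {X : Type*} [MetricSpace X] (x : X) (G : Set X) : Prop :=
  ∃ (L : ℝ) (γ : ℝ → X), 0 ≤ L ∧ γ 0 = x ∧
    (∀ s ∈ Icc (0:ℝ) L, ∀ t ∈ Icc (0:ℝ) L, dist (γ s) (γ t) = |s - t|) ∧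
    G = γ '' Icc (0:ℝ) L

/-- `G` is a geodesic segment from `x` to `y`. -/
def IsGeodesicSegmentBetween {X : Type*} [MetricSpace X] (x y : X) (G : Set X) : Prop :=
  ∃ γ : ℝ → X, γ 0 = x ∧ γ (dist x y) = y ∧
    (∀ s ∈ Icc (0:ℝ) (dist x y), ∀ t ∈ Icc (0:ℝ) (dist x y),
      dist (γ s) (γ t) = |s - t|) ∧
    G = γ '' Icc (0:ℝ) (dist x y)

/-- `p` is a nearest point of `C` to `z` (a closest-point projection of `z`
onto `C`). -/
def IsNearestPoint {X : Type*} [MetricSpace X] (z : X) (C : Set X) (p : X) : Prop :=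
  p ∈ C ∧ ∀ q ∈ C, dist z p ≤ dist z q

/-- Weak (Δ-)convergence of a net `u` (indexed by a preordered set) to `x`:
for every geodesic segment `G` starting at `x`, the closest-point projections
of the `u i` onto `G` converge to `x` in the metric. -/
def WeakConv {X : Type*} [MetricSpace X] {I : Type*} [Preorder I]
    (u : I → X) (x : X) : Prop :=
  ∀ G : Set X, IsGeodesicSegmentFrom x G →
    ∀ p : I → X, (∀ i, IsNearestPoint (u i) G (p i)) → Tendsto p atTop (𝓝 x)

/-- The sets that are closed in the weak topology `T_Δ`: sets containing all
weak limits of bounded sequences of their elements. -/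
def TdeltaClosed {X : Type*} [MetricSpace X] (A : Set X) : Prop :=
  ∀ u : ℕ → X, (∀ n, u n ∈ A) → Bornology.IsBounded (Set.range u) →
    ∀ x : X, WeakConv u x → x ∈ A

/-- `T` is the weak topology `T_Δ`: its closed sets are exactly the weakly
sequentially closed sets. -/
def IsWeakTopology {X : Type*} [MetricSpace X] (T : TopologicalSpace X) : Prop :=
  ∀ A : Set X, @IsClosed X T A ↔ TdeltaClosed A

/-- Geodesic convexity of a subset of a metric space. -/
def GeodesicallyConvex {X : Type*} [MetricSpace X] (C : Set X) : Prop :=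
  ∀ x ∈ C, ∀ y ∈ C, ∀ G : Set X, IsGeodesicSegmentBetween x y G → G ⊆ C

/-- The coconvex topology `T_co`: the coarsest topology on `X` in which every
metrically closed, (geodesically) convex set is closed. -/
def coconvexTopology (X : Type*) [MetricSpace X] : TopologicalSpace X :=
  TopologicalSpace.generateFrom
    {U : Set X | ∃ C : Set X, IsClosed C ∧ GeodesicallyConvex C ∧ U = Cᶜ}

/-!
Suppose `u` is frequently outside a `T_Δ`-open neighbourhood `U` of `x`. Projecting onto the
segment `[x, y]` shows that weak convergence gives, for every `y`, eventually
`d(u i, x) ≤ d(u i, y) + δ`. A diagonal choice extracts a sequence `v n = u iₙ ∉ U` with this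
control (for `δ = 1/(n+1)`) against every point of a bounded midpoint-closed set `M` containing
all `v n`. In a CAT(0) space such control forces weak convergence: if the projections `p n` of
`v n` onto a segment from `x` stay `ε` away from `x`, they cluster at some `z`; an approximate
nearest point `q` of `z` in `M` satisfies `d(v n, q) ≤ d(v n, z) + σ`, so
`d(v n, x) ≤ d(v n, p n) + 3σ`, whereas the CN inequality gives
`d(v n, p n)² + ε²/2 ≤ d(v n, x)²`. Hence `v` converges weakly to `x`, and `x ∉ U` contradicts
the `T_Δ`-closedness of `Uᶜ`.
-/

theorem dist_eq_mul_of_dist_succ_eq {X : Type*} [PseudoMetricSpace X] {f : ℕ → X} {N : ℕ}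
    {s : ℝ} (hstep : ∀ k < N, dist (f k) (f (k + 1)) = s) (hN : dist (f 0) (f N) = N * s)
    {k k' : ℕ} (hkk' : k ≤ k') (hk' : k' ≤ N) :
    dist (f k) (f k') = (k' - k) * s := by
  have upper : ∀ {m n : ℕ}, m ≤ n → n ≤ N → dist (f m) (f n) ≤ (n - m) * s := by
    intro m n hmn hn
    calc dist (f m) (f n) ≤ ∑ i ∈ Finset.Ico m n, dist (f i) (f (i + 1)) :=
          dist_le_Ico_sum_dist f hmn
      _ = ∑ _i ∈ Finset.Ico m n, s :=
          Finset.sum_congr rfl fun i hi => hstep i (by grind)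
      _ = (n - m) * s := by simp [Nat.cast_sub hmn]
  -- The three pieces `[0, k]`, `[k, k']`, `[k', N]` must add up to the total length `N * s`.
  refine le_antisymm (upper hkk' hk') ?_
  have := dist_triangle4 (f 0) (f k) (f k') (f N)
  have h0k := upper (Nat.zero_le k) (hkk'.trans hk')
  have hk'N := upper hk' le_rfl
  push_cast at h0k
  linarith

section DyadicPath

variable {X : Type*} (mid : X → X → X) (x y : X)

/-- `dyadicPath mid x y n k` is the point of parameter `k / 2 ^ n` on a path from `x` to `y`
built by repeatedly taking midpoints with `mid`. -/
noncomputable def dyadicPath : ℕ → ℕ → X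
  | 0, k => if k = 0 then x else y
  | n + 1, k => if k % 2 = 0 then dyadicPath n (k / 2)
      else mid (dyadicPath n (k / 2)) (dyadicPath n (k / 2 + 1))

theorem dyadicPath_succ_two_mul (n k : ℕ) :
    dyadicPath mid x y (n + 1) (2 * k) = dyadicPath mid x y n k := by
  simp [dyadicPath]

theorem dyadicPath_succ_two_mul_add_one (n k : ℕ) :
    dyadicPath mid x y (n + 1) (2 * k + 1) =
      mid (dyadicPath mid x y n k) (dyadicPath mid x y n (k + 1)) := by
  simp [dyadicPath, Nat.add_mod, show (2 * k + 1) / 2 = k by omega]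

theorem dyadicPath_left (n : ℕ) : dyadicPath mid x y n 0 = x := by
  induction n with
  | zero => simp [dyadicPath]
  | succ n ih => simpa using (dyadicPath_succ_two_mul mid x y n 0).trans ih

theorem dyadicPath_right (n : ℕ) : dyadicPath mid x y n (2 ^ n) = y := by
  induction n with
  | zero => simp [dyadicPath]
  | succ n ih => rw [pow_succ', dyadicPath_succ_two_mul, ih]

variable [MetricSpace X] {mid} (hmid : ∀ a b : X, IsMidpoint a b (mid a b))
include hmid

theorem dist_dyadicPath_add_one {n k : ℕ} (hk : k < 2 ^ n) :
    dist (dyadicPath mid x y n k) (dyadicPath mid x y n (k + 1)) = dist x y / 2 ^ n := by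
  induction n generalizing k with
  | zero =>
    obtain rfl : k = 0 := by simpa using hk
    simp [dyadicPath]
  | succ n ih =>
    obtain ⟨l, rfl | rfl⟩ := Nat.even_or_odd' k
    · rw [dyadicPath_succ_two_mul, dyadicPath_succ_two_mul_add_one, (hmid _ _).1,
        ih (by omega), pow_succ, div_div]
    · rw [show 2 * l + 1 + 1 = 2 * (l + 1) by ring, dyadicPath_succ_two_mul,
        dyadicPath_succ_two_mul_add_one, dist_comm, (hmid _ _).2, ih (by omega), pow_succ,
        div_div]

theorem dist_dyadicPath {n k k' : ℕ} (hk : k ≤ 2 ^ n) (hk' : k' ≤ 2 ^ n) :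
    dist (dyadicPath mid x y n k) (dyadicPath mid x y n k') =
      |(k : ℝ) - k'| * dist x y / 2 ^ n := by
  have hstep (k) (hk : k < 2 ^ n) := dist_dyadicPath_add_one x y hmid hk
  have hN : dist (dyadicPath mid x y n 0) (dyadicPath mid x y n (2 ^ n)) =
      ((2 ^ n : ℕ) : ℝ) * (dist x y / 2 ^ n) := by
    rw [dyadicPath_left, dyadicPath_right]; push_cast; field_simp
  rcases le_total k k' with h | h
  · rw [dist_eq_mul_of_dist_succ_eq hstep hN h hk', abs_sub_comm,
      abs_of_nonneg (sub_nonneg.2 (by exact_mod_cast h))]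
    ring
  · rw [dist_comm, dist_eq_mul_of_dist_succ_eq hstep hN h hk,
      abs_of_nonneg (sub_nonneg.2 (by exact_mod_cast h))]
    ring

end DyadicPath

section Geodesic

variable {X : Type*} [MetricSpace X]

theorem floor_mul_two_pow_le {a : ℝ} (ha : a ≤ 1) (n : ℕ) : ⌊a * 2 ^ n⌋₊ ≤ 2 ^ n :=
  Nat.floor_le_of_le (by push_cast; nlinarith [pow_pos two_pos (M₀ := ℝ) n])

theorem cauchySeq_dyadicPath_floor {mid : X → X → X} (hmid : ∀ a b : X, IsMidpoint a b (mid a b))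
    (x y : X) {a : ℝ} (ha : a ∈ Icc (0 : ℝ) 1) :
    CauchySeq fun n => dyadicPath mid x y n ⌊a * 2 ^ n⌋₊ := by
  refine cauchySeq_of_le_geometric_two (C := 2 * dist x y) fun n => ?_
  have h₁ := Nat.floor_le (mul_nonneg ha.1 (pow_nonneg zero_le_two (M₀ := ℝ) n))
  have h₂ := Nat.lt_floor_add_one (a * 2 ^ n)
  have h₃ := Nat.floor_le (mul_nonneg ha.1 (pow_nonneg zero_le_two (M₀ := ℝ) (n + 1)))
  have h₄ := Nat.lt_floor_add_one (a * 2 ^ (n + 1))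
  have hgap : |((2 * ⌊a * 2 ^ n⌋₊ : ℕ) : ℝ) - ⌊a * 2 ^ (n + 1)⌋₊| ≤ 2 := by
    have e : a * 2 ^ (n + 1) = 2 * (a * 2 ^ n) := by ring
    push_cast
    rw [abs_le]
    constructor <;> linarith
  rw [← dyadicPath_succ_two_mul mid x y n,
    dist_dyadicPath x y hmid
      (by rw [pow_succ']; exact Nat.mul_le_mul_left 2 (floor_mul_two_pow_le ha.2 n))
      (floor_mul_two_pow_le ha.2 (n + 1))]
  calc _ ≤ 2 * dist x y / 2 ^ (n + 1) := by gcongr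
    _ = 2 * dist x y / 2 / 2 ^ n := by rw [pow_succ]; ring

theorem exists_dist_eq_abs_sub_mul [CompleteSpace X] {mid : X → X → X}
    (hmid : ∀ a b : X, IsMidpoint a b (mid a b)) (x y : X) :
    ∃ φ : ℝ → X, φ 0 = x ∧ φ 1 = y ∧
      ∀ a ∈ Icc (0 : ℝ) 1, ∀ b ∈ Icc (0 : ℝ) 1, dist (φ a) (φ b) = |a - b| * dist x y := by
  have : Nonempty X := ⟨x⟩
  set φ : ℝ → X := fun a => limUnder atTop fun n => dyadicPath mid x y n ⌊a * 2 ^ n⌋₊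
  have hφ (a) (ha : a ∈ Icc (0 : ℝ) 1) :
      Tendsto (fun n => dyadicPath mid x y n ⌊a * 2 ^ n⌋₊) atTop (𝓝 (φ a)) :=
    (cauchySeq_dyadicPath_floor hmid x y ha).tendsto_limUnder
  have hfloor (c : ℝ) (hc : 0 ≤ c) :
      Tendsto (fun n : ℕ => (⌊c * 2 ^ n⌋₊ : ℝ) / 2 ^ n) atTop (𝓝 c) :=
    (tendsto_nat_floor_mul_div_atTop hc).comp (tendsto_pow_atTop_atTop_of_one_lt one_lt_two)
  refine ⟨φ, ?_, ?_, fun a ha b hb => ?_⟩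
  · refine tendsto_nhds_unique (hφ 0 ⟨le_rfl, zero_le_one⟩) ?_
    simp [dyadicPath_left]
  · refine tendsto_nhds_unique (hφ 1 ⟨zero_le_one, le_rfl⟩) ?_
    have h (n : ℕ) : ⌊(1 : ℝ) * 2 ^ n⌋₊ = 2 ^ n := by
      rw [one_mul]; exact_mod_cast Nat.floor_natCast (R := ℝ) (2 ^ n)
    simp only [h, dyadicPath_right]
    exact tendsto_const_nhds
  · refine tendsto_nhds_unique ((hφ a ha).dist (hφ b hb)) ?_
    have hdist (n : ℕ) : dist (dyadicPath mid x y n ⌊a * 2 ^ n⌋₊)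
        (dyadicPath mid x y n ⌊b * 2 ^ n⌋₊) =
        |(⌊a * 2 ^ n⌋₊ : ℝ) / 2 ^ n - (⌊b * 2 ^ n⌋₊ : ℝ) / 2 ^ n| * dist x y := by
      rw [dist_dyadicPath x y hmid (floor_mul_two_pow_le ha.2 n) (floor_mul_two_pow_le hb.2 n),
        ← sub_div, abs_div, abs_of_pos (by positivity : (0 : ℝ) < 2 ^ n)]
      ring
    simp_rw [hdist]
    exact ((hfloor a ha.1).sub (hfloor b hb.1)).abs.mul_const _

theorem exists_isGeodesicSegmentBetween [CompleteSpace X] (hm : ∀ a b : X, ∃ m, IsMidpoint a b m)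
    (x y : X) : ∃ G, IsGeodesicSegmentBetween x y G := by
  choose mid hmid using hm
  obtain ⟨φ, hφ0, hφ1, hφ⟩ := exists_dist_eq_abs_sub_mul hmid x y
  refine ⟨_, fun s => φ (s / dist x y), by simpa using hφ0, ?_, fun s hs t ht => ?_, rfl⟩
  · dsimp only
    rcases (dist_nonneg : 0 ≤ dist x y).eq_or_lt with hd | hd
    · rw [← hd, div_zero, hφ0, dist_eq_zero.1 hd.symm]
    · rw [div_self hd.ne', hφ1]
  · rcases (dist_nonneg : 0 ≤ dist x y).eq_or_lt with hd | hd
    · obtain rfl : s = 0 := by rw [← hd] at hs; exact le_antisymm hs.2 hs.1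
      obtain rfl : t = 0 := by rw [← hd] at ht; exact le_antisymm ht.2 ht.1
      simp
    · have hmem {r : ℝ} (hr : r ∈ Icc 0 (dist x y)) : r / dist x y ∈ Icc (0 : ℝ) 1 :=
        ⟨div_nonneg hr.1 hd.le, div_le_one_of_le₀ hr.2 hd.le⟩
      rw [hφ _ (hmem hs) _ (hmem ht), ← sub_div, abs_div, abs_of_pos hd,
        div_mul_cancel₀ _ hd.ne']

theorem IsGeodesicSegmentBetween.isGeodesicSegmentFrom {x y : X} {G : Set X}
    (h : IsGeodesicSegmentBetween x y G) : IsGeodesicSegmentFrom x G :=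
  let ⟨γ, h0, _, hiso, hG⟩ := h
  ⟨dist x y, γ, dist_nonneg, h0, hiso, hG⟩

theorem IsGeodesicSegmentBetween.right_mem {x y : X} {G : Set X}
    (h : IsGeodesicSegmentBetween x y G) : y ∈ G := by
  obtain ⟨γ, -, h1, -, rfl⟩ := h
  exact ⟨dist x y, ⟨dist_nonneg, le_rfl⟩, h1⟩

variable {x : X} {G : Set X}

theorem IsGeodesicSegmentFrom.left_mem (h : IsGeodesicSegmentFrom x G) : x ∈ G := by
  obtain ⟨L, γ, hL, h0, -, rfl⟩ := h
  exact ⟨0, ⟨le_rfl, hL⟩, h0⟩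

theorem IsGeodesicSegmentFrom.isCompact (h : IsGeodesicSegmentFrom x G) : IsCompact G := by
  obtain ⟨L, γ, -, -, hiso, rfl⟩ := h
  refine isCompact_Icc.image_of_continuousOn
    (LipschitzOnWith.of_dist_le_mul (K := 1) fun s hs t ht => ?_).continuousOn
  simp [hiso s hs t ht, Real.dist_eq]

theorem IsGeodesicSegmentFrom.exists_isMidpoint (h : IsGeodesicSegmentFrom x G) {p : X}
    (hp : p ∈ G) : ∃ m ∈ G, IsMidpoint x p m := by
  obtain ⟨L, γ, hL, rfl, hiso, rfl⟩ := h
  obtain ⟨t, ht, rfl⟩ := hp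
  have h0 : (0 : ℝ) ∈ Icc 0 L := ⟨le_rfl, hL⟩
  have ht2 : t / 2 ∈ Icc 0 L := ⟨by linarith [ht.1], by linarith [ht.1, ht.2]⟩
  refine ⟨γ (t / 2), mem_image_of_mem γ ht2, ?_, ?_⟩
  · rw [hiso _ h0 _ ht2, hiso _ h0 _ ht, abs_of_nonpos (by linarith [ht.1]),
      abs_of_nonpos (by linarith [ht.1])]
    ring
  · rw [hiso _ ht _ ht2, hiso _ h0 _ ht, abs_of_nonneg (by linarith [ht.1]),
      abs_of_nonpos (by linarith [ht.1])]
    ring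

theorem IsCompact.exists_isNearestPoint {K : Set X} (hK : IsCompact K) (hne : K.Nonempty)
    (z : X) : ∃ p, IsNearestPoint z K p := by
  obtain ⟨p, hp, hmin⟩ := hK.exists_isMinOn hne (continuous_const.dist continuous_id).continuousOn
  exact ⟨p, hp, fun q hq => hmin hq⟩

end Geodesic

/-- The CN inequality of Bruhat–Tits, the last clause of `IsCAT0`. -/
def SatisfiesCN (X : Type*) [MetricSpace X] : Prop :=
  ∀ x y z m : X, IsMidpoint x y m →
    dist z m ^ 2 ≤ dist z x ^ 2 / 2 + dist z y ^ 2 / 2 - dist x y ^ 2 / 4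

namespace SatisfiesCN

variable {X : Type*} [MetricSpace X] (hcn : SatisfiesCN X)
include hcn

theorem mem_closedBall_of_isMidpoint {a b m c : X} {r : ℝ} (h : IsMidpoint a b m)
    (ha : a ∈ closedBall c r) (hb : b ∈ closedBall c r) : m ∈ closedBall c r := by
  rw [mem_closedBall, dist_comm] at ha hb ⊢
  have hr : 0 ≤ r := dist_nonneg.trans ha
  have hsq : dist c m ^ 2 ≤ r ^ 2 := by
    nlinarith [hcn a b c m h, pow_le_pow_left₀ dist_nonneg ha 2,
      pow_le_pow_left₀ dist_nonneg hb 2]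
  exact (pow_le_pow_iff_left₀ dist_nonneg hr two_ne_zero).1 hsq

theorem dist_sq_add_le_of_isNearestPoint {x z p : X} {G : Set X} (hp : IsNearestPoint z G p)
    (hmid : ∃ m ∈ G, IsMidpoint x p m) : dist z p ^ 2 + dist x p ^ 2 / 2 ≤ dist z x ^ 2 := by
  obtain ⟨m, hmG, hm⟩ := hmid
  nlinarith [hcn x p z m hm, pow_le_pow_left₀ dist_nonneg (hp.2 m hmG) 2]

variable {M : Set X} (hM : ∀ a ∈ M, ∀ b ∈ M, ∃ m ∈ M, IsMidpoint a b m)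
include hM

theorem one_sub_inv_two_pow_mul_dist_sq_le {z q : X} {θ : ℝ} (hqM : q ∈ M)
    (hq : ∀ c ∈ M, dist z q ^ 2 ≤ dist z c ^ 2 + θ) (j : ℕ) :
    ∀ c ∈ M, (1 - 2⁻¹ ^ j) * dist q c ^ 2 ≤ dist z c ^ 2 - dist z q ^ 2 + 2 ^ j * θ := by
  induction j with
  | zero =>
    intro c hc
    simp only [pow_zero, sub_self, zero_mul, one_mul]
    linarith [hq c hc]
  | succ j ih =>
    intro c hc
    obtain ⟨m, hmM, hm⟩ := hM q hqM c hc
    have hmid := ih m hmM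
    rw [hm.1] at hmid
    rw [pow_succ, pow_succ]
    linear_combination 2 * hmid + 2 * hcn q c z m hm

theorem exists_mem_forall_dist_le_add (hMb : Bornology.IsBounded M) (hMne : M.Nonempty) (z : X)
    {η : ℝ} (hη : 0 < η) : ∃ q ∈ M, ∀ c ∈ M, dist c q ≤ dist c z + η := by
  obtain ⟨D, hD⟩ : ∃ D, ∀ a ∈ M, ∀ b ∈ M, dist a b ≤ D :=
    ⟨diam M, fun a ha b hb => dist_le_diam_of_mem hMb ha hb⟩
  obtain ⟨j, hj⟩ := exists_pow_lt_of_lt_one (by positivity : 0 < η ^ 2 / 2 / (D ^ 2 + 1))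
    (by norm_num : (2⁻¹ : ℝ) < 1)
  set θ := η ^ 2 / 2 * 2⁻¹ ^ j
  have hθ : 2 ^ j * θ = η ^ 2 / 2 := by
    rw [mul_left_comm, ← mul_pow]; norm_num
  obtain ⟨q, hqM, hq⟩ : ∃ q ∈ M, ∀ c ∈ M, dist z q ^ 2 ≤ dist z c ^ 2 + θ := by
    have hbdd : BddBelow ((fun c => dist z c ^ 2) '' M) :=
      ⟨0, by rintro _ ⟨c, -, rfl⟩; positivity⟩
    obtain ⟨_, ⟨q, hqM, rfl⟩, hlt⟩ :=
      exists_lt_of_csInf_lt (hMne.image fun c => dist z c ^ 2) (lt_add_of_pos_right _ (by positivity : 0 < θ))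
    exact ⟨q, hqM, fun c hc => by linarith [csInf_le hbdd (mem_image_of_mem _ hc)]⟩
  refine ⟨q, hqM, fun c hc => ?_⟩
  have hpyth := one_sub_inv_two_pow_mul_dist_sq_le hcn hM hqM hq j c hc
  have hsmall : 2⁻¹ ^ j * dist q c ^ 2 ≤ η ^ 2 / 2 := by
    rw [lt_div_iff₀ (by positivity)] at hj
    nlinarith [pow_le_pow_left₀ dist_nonneg (hD q hqM c hc) 2, pow_pos (by norm_num : (0 : ℝ) < 2⁻¹) j]
  have hsq : dist c q ^ 2 ≤ (dist c z + η) ^ 2 := by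
    rw [dist_comm c q, dist_comm c z]
    nlinarith [dist_nonneg (x := z) (y := c)]
  exact (pow_le_pow_iff_left₀ dist_nonneg (by positivity) two_ne_zero).1 hsq

theorem weakConv_of_eventually_dist_le (hMb : Bornology.IsBounded M) {I : Type*} [Preorder I] {v : I → X}
    {x : X} (hvM : ∀ i, v i ∈ M)
    (hv : ∀ y ∈ M, ∀ δ > 0, ∀ᶠ i in atTop, dist (v i) x ≤ dist (v i) y + δ) :
    WeakConv v x := by
  intro G hG p hp
  refine Metric.tendsto_nhds.2 fun ε hε => ?_
  by_contra hfar
  rw [not_eventually] at hfar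
  have : (atTop ⊓ 𝓟 {i | ¬ dist (p i) x < ε}).NeBot := frequently_iff_neBot.1 hfar
  obtain ⟨z, -, hz⟩ := hG.isCompact.exists_mapClusterPt (f := atTop ⊓ 𝓟 {i | ¬ dist (p i) x < ε})
    (tendsto_principal.2 (Eventually.of_forall fun i => (hp i).1))
  obtain ⟨R, hR, hMR⟩ := hMb.subset_closedBall_lt 0 x
  set σ := ε ^ 2 / (16 * R)
  have hσ : 0 < σ := by positivity
  obtain ⟨i₀, -⟩ := hfar.exists
  obtain ⟨q, hqM, hq⟩ := exists_mem_forall_dist_le_add hcn hM hMb ⟨v i₀, hvM i₀⟩ z hσ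
  have hfar' : ∀ᶠ i in atTop ⊓ 𝓟 {i | ¬ dist (p i) x < ε},
      ε ≤ dist (p i) x ∧ dist (v i) x ≤ dist (v i) q + σ :=
    (eventually_inf_principal.2 (Eventually.of_forall fun _ hi => not_lt.1 hi)).and
      ((hv q hqM σ hσ).filter_mono inf_le_left)
  obtain ⟨i, hpz, hpx, hvq⟩ :=
    ((hz.frequently (ball_mem_nhds z hσ)).and_eventually hfar').exists
  have hgap := hcn.dist_sq_add_le_of_isNearestPoint (hp i) (hG.exists_isMidpoint (hp i).1)
  have hpv : dist (v i) (p i) ≤ dist (v i) x := (hp i).2 x hG.left_mem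
  have hvR : dist (v i) x ≤ R := hMR (hvM i)
  have hclose : dist (v i) x - dist (v i) (p i) ≤ 3 * σ := by
    linarith [hq _ (hvM i), dist_triangle (v i) (p i) z]
  have hσR : 3 * σ * (2 * R) = 3 * ε ^ 2 / 8 := by
    simp only [σ]; field_simp; ring
  rw [dist_comm] at hpx
  nlinarith [mul_le_mul hclose (by linarith : dist (v i) x + dist (v i) (p i) ≤ 2 * R)
    (by positivity) (by positivity), pow_le_pow_left₀ hε.le hpx 2]

end SatisfiesCN

theorem WeakConv.eventually_dist_le {X : Type*} [MetricSpace X] [CompleteSpace X]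
    (hm : ∀ a b : X, ∃ m, IsMidpoint a b m) {I : Type*} [Preorder I] {u : I → X} {x : X}
    (h : WeakConv u x) (y : X) {δ : ℝ} (hδ : 0 < δ) :
    ∀ᶠ i in atTop, dist (u i) x ≤ dist (u i) y + δ := by
  obtain ⟨G, hG⟩ := exists_isGeodesicSegmentBetween hm x y
  have hGx := hG.isGeodesicSegmentFrom
  choose p hp using fun i => hGx.isCompact.exists_isNearestPoint ⟨x, hGx.left_mem⟩ (u i)
  filter_upwards [Metric.tendsto_nhds.1 (h G hGx p hp) δ hδ] with i hi
  calc dist (u i) x ≤ dist (u i) (p i) + dist (p i) x := dist_triangle _ _ _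
    _ ≤ dist (u i) y + δ := add_le_add ((hp i).2 y hG.right_mem) hi.le

theorem exists_seq_of_frequently_of_eventually {X I : Type*} {l : Filter I} (mid : X → X → X)
    {B : Set X} (hB : ∀ a ∈ B, ∀ b ∈ B, mid a b ∈ B) {u : I → X} (huB : ∀ i, u i ∈ B)
    {A : Set X} (hA : ∃ᶠ i in l, u i ∈ A) {Q : ℕ → X → X → Prop}
    (hQ : ∀ n y, ∀ᶠ i in l, Q n y (u i)) :
    ∃ (v : ℕ → X) (M : Set X), M ⊆ B ∧ (∀ n, v n ∈ A ∧ v n ∈ M) ∧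
      (∀ a ∈ M, ∀ b ∈ M, mid a b ∈ M) ∧ ∀ y ∈ M, ∀ᶠ n in atTop, Q n y (v n) := by
  classical
  have hsel (n : ℕ) (S : Finset X) : ∃ a ∈ B, a ∈ A ∧ ∀ y ∈ S, Q n y a := by
    obtain ⟨i, hiA, hiQ⟩ :=
      (hA.and_eventually ((eventually_all_finset S).2 fun y _ => hQ n y)).exists
    exact ⟨u i, huB i, hiA, hiQ⟩
  choose pick hpickB hpickA hpickQ using hsel
  -- `pick n (F n)` obeys `Q n` at every point of `F n`, and every point of `⋃ n, F n` lies in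
  -- `F n` for all large `n`.
  let step (n : ℕ) (S : Finset X) : Finset X :=
    insert (pick n S) S ∪ Finset.image₂ mid (insert (pick n S) S) (insert (pick n S) S)
  let F (n : ℕ) : Finset X := Nat.rec (motive := fun _ => Finset X) ∅ step n
  have hstep (n : ℕ) : F (n + 1) = step n (F n) := rfl
  have hmono : Monotone F := monotone_nat_of_le_succ fun n => by
    rw [hstep]
    exact (Finset.subset_insert _ _).trans Finset.subset_union_left
  have hFB (n : ℕ) : (F n : Set X) ⊆ B := by
    induction n with
    | zero => simp [F]
    | succ n ih =>
      have hins : ((insert (pick n (F n)) (F n) : Finset X) : Set X) ⊆ B := by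
        rw [Finset.coe_insert]; exact insert_subset (hpickB _ _) ih
      rw [hstep, Finset.coe_union, Finset.coe_image₂]
      exact union_subset hins (image2_subset_iff.2 fun a ha b hb => hB a (hins ha) b (hins hb))
  have hmid {n : ℕ} {a b : X} (ha : a ∈ F n) (hb : b ∈ F n) : mid a b ∈ F (n + 1) := by
    rw [hstep]
    exact Finset.mem_union_right _
      (Finset.mem_image₂_of_mem (Finset.mem_insert_of_mem ha) (Finset.mem_insert_of_mem hb))
  refine ⟨fun n => pick n (F n), ⋃ n, (F n : Set X), iUnion_subset hFB, fun n => ⟨hpickA _ _, ?_⟩,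
    fun a ha b hb => ?_, fun y hy => ?_⟩
  · exact mem_iUnion.2 ⟨n + 1, by rw [hstep]; simp [step]⟩
  · obtain ⟨k, hk⟩ := mem_iUnion.1 ha
    obtain ⟨k', hk'⟩ := mem_iUnion.1 hb
    exact mem_iUnion.2 ⟨max k k' + 1,
      hmid (hmono (le_max_left k k') hk) (hmono (le_max_right k k') hk')⟩
  · obtain ⟨N, hN⟩ := mem_iUnion.1 hy
    filter_upwards [eventually_ge_atTop N] with n hn using hpickQ _ _ _ (hmono hn hN)

theorem weakConv_net_tendsto_weak_topology_general
    (X : Type*) [MetricSpace X] (hX : IsCAT0 X)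
    (TΔ : TopologicalSpace X) (hTΔ : IsWeakTopology TΔ)
    {I : Type*} [Preorder I]
    (u : I → X) (hb : Bornology.IsBounded (Set.range u))
    (x : X) (h : WeakConv u x) :
    Filter.Tendsto u Filter.atTop (@nhds X TΔ x) := by
  obtain ⟨_, hm, hcn⟩ := hX
  choose mid hmid using hm
  obtain ⟨r, hr⟩ := (isBounded_iff_subset_closedBall x).1 hb
  refine (@_root_.tendsto_nhds X TΔ).2 fun U hU hxU => ?_
  by_contra hU'
  obtain ⟨v, M, hMr, hv, hMmid, hvM⟩ := exists_seq_of_frequently_of_eventually mid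
    (fun a ha b hb => SatisfiesCN.mem_closedBall_of_isMidpoint hcn (hmid a b) ha hb)
    (fun i => hr (mem_range_self i)) (A := Uᶜ) (not_eventually.1 hU')
    (Q := fun n y a => dist a x ≤ dist a y + 1 / (n + 1))
    fun n y => h.eventually_dist_le (fun a b => ⟨mid a b, hmid a b⟩) y Nat.one_div_pos_of_nat
  have hMb : Bornology.IsBounded M := isBounded_closedBall.subset hMr
  have hvx : WeakConv v x := SatisfiesCN.weakConv_of_eventually_dist_le hcn
    (fun a ha b hb => ⟨mid a b, hMmid a ha b hb, hmid a b⟩) hMb (fun n => (hv n).2)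
    fun y hy δ hδ => by
      filter_upwards [hvM y hy, tendsto_one_div_add_atTop_nhds_zero_nat.eventually
        (gt_mem_nhds hδ)] with n hn hnδ
      linarith
  exact (hTΔ Uᶜ).1 (@IsOpen.isClosed_compl X TΔ U hU) v (fun n => (hv n).1)
    (hMb.subset (range_subset_iff.2 fun n => (hv n).2)) x hvx hxU

/-- If a bounded net in a CAT(0) space converges weakly to
`x`, then it converges to `x` with respect to the weak topology `T_Δ`. -/
theorem weakConv_net_tendsto_weak_topology
    (X : Type*) [MetricSpace X] (hX : IsCAT0 X)
    (TΔ : TopologicalSpace X) (hTΔ : IsWeakTopology TΔ)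
    {I : Type*} [Preorder I] [IsDirected I (· ≤ ·)] [Nonempty I]
    (u : I → X) (hb : Bornology.IsBounded (Set.range u))
    (x : X) (h : WeakConv u x) :
    Filter.Tendsto u Filter.atTop (@nhds X TΔ x) :=
  weakConv_net_tendsto_weak_topology_general X hX TΔ hTΔ u hb x h
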